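/- Let q ∈ UCRPQ(a, a*) over a finite alphabet Σ and let A, B ⊆ Σ. If q is A-bounded and B-bounded, then q is (A ∪ B)-bounded. -/

import Mathlib

namespace Paper

/-! ## Words -/

/-- `wpow w n` is the word `w` repeated `n` times. -/
def wpow {α : Type} (w : List α) (n : ℕ) : List α := (List.replicate n w).flatten

/-! ## Graph databases -/

/-- A graph database over the alphabet `α`: a finite set of vertices together with
labelled edges. -/
structure GDB (α : Type) : Type 1 where
  V : Type
  finV : Finite V
  edges : Set (V × α × V)

/-! ## Conjunctive queries -/

/-- A (Boolean) conjunctive query over `α`: a finite set of variables and a set of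
atoms `x —a→ y` with `a ∈ α`. -/
structure CQ (α : Type) : Type 1 where
  V : Type
  finV : Finite V
  atoms : Set (V × α × V)

variable {α : Type}

/-- `h` is a homomorphism from the CQ `p` to the CQ `p'`. -/
def CQ.Hom (p p' : CQ α) (h : p.V → p'.V) : Prop :=
  ∀ x a y, (x, a, y) ∈ p.atoms → (h x, a, h y) ∈ p'.atoms

/-- There is a homomorphism from the CQ `p` to the CQ `p'`. -/
def CQ.homTo (p p' : CQ α) : Prop := ∃ h, p.Hom p' h

/-- There is a homomorphism from the CQ `p` to the graph database `G`. -/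
def CQ.homToG (p : CQ α) (G : GDB α) : Prop :=
  ∃ h : p.V → G.V, ∀ x a y, (x, a, y) ∈ p.atoms → (h x, a, h y) ∈ G.edges

/-! ## CRPQs -/

/-- A (Boolean) conjunctive regular path query over alphabet `α` with variables `V`:
a finite conjunction of atoms `src i —lang i→ tgt i`. -/
structure CRPQ (α V : Type) where
  k : ℕ
  src : Fin k → V
  lang : Fin k → Set (List α)
  tgt : Fin k → V

variable {V : Type}

/-! ## Expansions -/

/-- Variables of an expansion before collapsing equality atoms: the original variables
plus, for each atom `i` expanded by the word `w i`, the fresh variables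
`z_1, …, z_{|w i| - 1}`. -/
def RawVar (q : CRPQ α V) (w : Fin q.k → List α) : Type :=
  V ⊕ (Σ i : Fin q.k, Fin ((w i).length - 1))

instance {q : CRPQ α V} [Finite V] {w : Fin q.k → List α} : Finite (RawVar q w) := by
  unfold RawVar; infer_instance

/-- The `j`-th variable (`0 ≤ j ≤ |w i|`) on the path expanding atom `i`:
position `0` is the source variable, position `|w i|` the target variable, and the
intermediate positions are fresh variables. -/
def node (q : CRPQ α V) (w : Fin q.k → List α) (i : Fin q.k) (j : ℕ) : RawVar q w :=
  if j = 0 then Sum.inl (q.src i)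
  else if j = (w i).length then Sum.inl (q.tgt i)
  else if h : j - 1 < (w i).length - 1 then Sum.inr ⟨i, ⟨j - 1, h⟩⟩
  else Sum.inl (q.src i)

/-- The equality atoms produced by `ε`-expansions: `src i = tgt i` whenever `w i = ε`.
(The expansion collapses the equivalence they generate.) -/
def eqRel (q : CRPQ α V) (w : Fin q.k → List α) : RawVar q w → RawVar q w → Prop :=
  fun x y => ∃ i, w i = [] ∧ x = Sum.inl (q.src i) ∧ y = Sum.inl (q.tgt i)

/-- The expansion of the CRPQ `q` obtained by expanding each atom `i` with the word
`w i`: each atom is replaced by its `w i`-expansion, and equality atoms are collapsed. -/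
def expansion (q : CRPQ α V) [Finite V] (w : Fin q.k → List α) : CQ α where
  V := Quot (eqRel q w)
  finV := Finite.of_surjective (Quot.mk _) fun x => Quot.exists_rep x
  atoms := { t | ∃ (i : Fin q.k) (j : ℕ) (hj : j < (w i).length),
    t = (Quot.mk _ (node q w i j), (w i).get ⟨j, hj⟩, Quot.mk _ (node q w i (j + 1))) }

/-- `Exp q`: the set of all expansions of the CRPQ `q`. -/
def Exp (q : CRPQ α V) [Finite V] : Set (CQ α) :=
  { p | ∃ w : Fin q.k → List α, (∀ i, w i ∈ q.lang i) ∧ p = expansion q w }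

/-- `Expm q m`: the set of all `m`-expansions of the CRPQ `q`. -/
def Expm (q : CRPQ α V) [Finite V] (m : ℕ) : Set (CQ α) :=
  { p | ∃ w : Fin q.k → List α,
      (∀ i, w i ∈ q.lang i) ∧ (∀ i, (w i).length ≤ m) ∧ p = expansion q w }

/-! ## UCRPQs, satisfaction, containment, boundedness -/

/-- The set of expansions of a UCRPQ (a finite disjunction of CRPQs). -/
def ExpU (Q : List (CRPQ α V)) [Finite V] : Set (CQ α) :=
  { p | ∃ q ∈ Q, p ∈ Exp q }

/-- The set of `m`-expansions of a UCRPQ. -/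
def ExpmU (Q : List (CRPQ α V)) [Finite V] (m : ℕ) : Set (CQ α) :=
  { p | ∃ q ∈ Q, p ∈ Expm q m }

/-- Satisfaction of a (possibly infinite) disjunction of CQs by a graph database. -/
def SatSet (S : Set (CQ α)) (G : GDB α) : Prop := ∃ p ∈ S, p.homToG G

/-- `G ⊨ Q` for a UCRPQ `Q`: some expansion of `Q` maps homomorphically into `G`. -/
def Sat (Q : List (CRPQ α V)) [Finite V] (G : GDB α) : Prop := SatSet (ExpU Q) G

/-- Containment of queries (viewed as properties of graph databases):
every graph database satisfying the first satisfies the second. -/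
def Contained (P P' : GDB α → Prop) : Prop := ∀ G, P G → P' G

/-- Equivalence of queries (viewed as properties of graph databases). -/
def QEquiv (P P' : GDB α → Prop) : Prop := ∀ G, P G ↔ P' G

/-- A query is bounded iff it is equivalent to some UCQ (finite disjunction of CQs). -/
def Bounded (P : GDB α → Prop) : Prop :=
  ∃ Φ : List (CQ α), ∀ G, P G ↔ ∃ p ∈ Φ, p.homToG G


/-! ## The class UCRPQ(SSF, w*) -/

/-- An atom language in the class (SSF, w*): either a succinct star-free expression
(denoting a finite language), or `w*` for a word `w`. -/
inductive AtomLang (α : Type) : Type where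
  | ssf (L : Set (List α)) (h : L.Finite) : AtomLang α
  | star (w : List α) : AtomLang α

variable {α V : Type}

/-- The language denoted by an atom of the class (SSF, w*). -/
def AtomLang.language : AtomLang α → Set (List α)
  | .ssf L _ => L
  | .star w => { u | ∃ n, u = wpow w n }

/-- A CRPQ all of whose atom languages are SSF expressions or expressions `w*`. -/
structure SCRPQ (α V : Type) where
  k : ℕ
  src : Fin k → V
  lang : Fin k → AtomLang α
  tgt : Fin k → V

/-- The underlying CRPQ of an SCRPQ. -/
def SCRPQ.toCRPQ (q : SCRPQ α V) : CRPQ α V :=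
  ⟨q.k, q.src, fun i => (q.lang i).language, q.tgt⟩

/-- The underlying UCRPQ of a UCRPQ in the class (SSF, w*). -/
def toU (Q : List (SCRPQ α V)) : List (CRPQ α V) := Q.map SCRPQ.toCRPQ

/-- Satisfaction for UCRPQs of the class (SSF, w*). -/
def SatS (Q : List (SCRPQ α V)) [Finite V] (G : GDB α) : Prop := Sat (toU Q) G

/-- `AtomLang.cut m`: replace `w*` with `w^{≤m} = {w^n : n ≤ m}`; SSF atoms unchanged. -/
def AtomLang.cut (m : ℕ) : AtomLang α → AtomLang α
  | .ssf L h => .ssf L h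
  | .star w => .ssf (wpow w '' Set.Iic m) ((Set.finite_Iic m).image _)

/-- `q(m)` for a CRPQ: replace every expression `w*` with `w^{≤m}`. -/
def SCRPQ.cut (m : ℕ) (q : SCRPQ α V) : SCRPQ α V :=
  ⟨q.k, q.src, fun i => (q.lang i).cut m, q.tgt⟩

/-- `q(m)` for a UCRPQ: replace every expression `w*` with `w^{≤m}`. -/
def qcut (Q : List (SCRPQ α V)) (m : ℕ) : List (SCRPQ α V) := Q.map (SCRPQ.cut m)

/-- `‖Q‖`: number of atoms of the UCRPQ `Q`. -/
def natoms (Q : List (SCRPQ α V)) : ℕ := (Q.map SCRPQ.k).sum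

/-- The set `W` of words `w` such that `w*` labels a recursive atom of `Q`. -/
def recWords (Q : List (SCRPQ α V)) : Set (List α) :=
  { w | ∃ q ∈ Q, ∃ i : Fin q.k, q.lang i = AtomLang.star w }

/-- `N`: the maximum length of a word in the language of a non-recursive atom of `Q`. -/
noncomputable def nrBound (Q : List (SCRPQ α V)) : ℕ :=
  sSup { n | ∃ q ∈ Q, ∃ i : Fin q.k, ∃ (L : Set (List α)) (h : L.Finite),
    q.lang i = AtomLang.ssf L h ∧ ∃ u ∈ L, u.length = n }

/-- `Z := ‖Q‖³ · N · |vars(Q)| · Π_{w ∈ W} |w|`. -/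
noncomputable def Zbound (Q : List (SCRPQ α V)) [Fintype V] : ℕ :=
  natoms Q ^ 3 * nrBound Q * Fintype.card V * ∏ᶠ w ∈ recWords Q, w.length

/-- `Z⁺ := ‖Q‖ · Z + 1`. -/
noncomputable def Zplus (Q : List (SCRPQ α V)) [Fintype V] : ℕ :=
  natoms Q * Zbound Q + 1

/-! ## Letter-boundedness -/

/-- Membership in the class UCRPQ(SSF, a*): atoms are SSF or `a*` for a letter `a`. -/
def AtomLang.inSSFaStar : AtomLang α → Prop
  | .ssf _ _ => True
  | .star w => ∃ a, w = [a]

/-- Membership in the class UCRPQ(a, a*): every atom language is `{a}` or `{a}*`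
for a letter `a`. -/
def AtomLang.in_a_aStar : AtomLang α → Prop
  | .ssf L _ => ∃ a : α, L = {[a]}
  | .star w => ∃ a, w = [a]

/-- An atom language which is an SSF expression or `a*` only for letters `a ∉ A`. -/
def AtomLang.okOutside (A : Set α) : AtomLang α → Prop
  | .ssf _ _ => True
  | .star w => ∃ a, a ∉ A ∧ w = [a]

open Classical in
/-- Replace `a*` with `a^{≤m} = {ε, a, …, a^m}` for every letter `a ∈ A`. -/
noncomputable def AtomLang.restrict (A : Set α) (m : ℕ) : AtomLang α → AtomLang α
  | .ssf L h => .ssf L h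
  | .star w => if ∃ a ∈ A, w = [a]
      then .ssf (wpow w '' Set.Iic m) ((Set.finite_Iic m).image _)
      else .star w

/-- `q(A, m)` (also `q[A ↦ m]`) for a CRPQ. -/
noncomputable def SCRPQ.restrict (A : Set α) (m : ℕ) (q : SCRPQ α V) : SCRPQ α V :=
  ⟨q.k, q.src, fun i => (q.lang i).restrict A m, q.tgt⟩

/-- `Q(A, m)` (also `Q[A ↦ m]`): the result of replacing in `Q` every atom language
`a*` with `a ∈ A` by `a^{≤m}`. -/
noncomputable def qrestrict (Q : List (SCRPQ α V)) (A : Set α) (m : ℕ) :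
    List (SCRPQ α V) := Q.map (SCRPQ.restrict A m)

/-- `Q` is `A`-bounded: `Q` is equivalent to some UCRPQ whose atom languages are SSF
expressions or expressions `a*` only for letters `a ∉ A`. -/
def BddIn (Q : List (SCRPQ α V)) [Finite V] (A : Set α) : Prop :=
  ∃ (n : ℕ) (Q' : List (SCRPQ α (Fin n))),
    (∀ d ∈ Q', ∀ i : Fin d.k, (d.lang i).okOutside A) ∧ QEquiv (SatS Q) (SatS Q')

/-!
In an expansion of a CQ with `k` atoms in which the letters of `T` occur only at positions
`≤ N` of the expanding words, every `T`-labelled edge leaves one of at most `k (N + 1)`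
variables, so a path `a^n` with `a ∈ T` can be shortened, by cutting loops, to one of length
`≤ k (N + 1)`. If `q ≡ Q'` where `Q'` has no atom `a*` with `a ∈ S`, this bound holds for
every expansion `r` of `Q'` with `T := S` and `N` the longest SSF word of `Q'`.

Now let `p` be an expansion of `q` whose `T`-letters lie within the first `N + 1` positions.
Since `p ⊨ Q'`, some expansion `r` of `Q'` maps to `p`, and since `r ⊨ q` some expansion of `q`
maps to `r`. Shortening its `a*`-atoms with `a ∈ S` inside `r`, and those with `a ∈ T` inside
`p`, gives an expansion of `q(T ∪ S, K)` mapping to `p`, whose `(T ∪ S)`-letters again lie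
within bounded positions. Doing this once with `(T, S) = (∅, A)` and once with `(A, B)` shows
`q ⊑ q(A ∪ B, m)` for some `m`; the converse containment is clear, and `q(A ∪ B, m)` has
no atom `a*` with `a ∈ A ∪ B`.
-/

def CQ.canonicalDB (p : CQ α) : GDB α := ⟨p.V, p.finV, p.atoms⟩

lemma CQ.homToG.trans {p p' : CQ α} {G : GDB α} (h : p.homToG p'.canonicalDB)
    (h' : p'.homToG G) : p.homToG G := by
  obtain ⟨f, hf⟩ := h
  obtain ⟨g, hg⟩ := h'
  exact ⟨g ∘ f, fun x a y hxy => hg _ _ _ (hf x a y hxy)⟩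

def HasWalk (G : GDB α) (x : G.V) (u : List α) (y : G.V) : Prop :=
  ∃ f : ℕ → G.V, f 0 = x ∧ f u.length = y ∧
    ∀ (j : ℕ) (hj : j < u.length), (f j, u[j], f (j + 1)) ∈ G.edges

lemma HasWalk.map {G H : GDB α} {F : G.V → H.V}
    (hF : ∀ x a y, (x, a, y) ∈ G.edges → (F x, a, F y) ∈ H.edges)
    {x y : G.V} {u : List α} (h : HasWalk G x u y) : HasWalk H (F x) u (F y) := by
  obtain ⟨f, h0, hn, he⟩ := h
  exact ⟨F ∘ f, by simp [h0], by simp [hn], fun j hj => hF _ _ _ (he j hj)⟩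

lemma hasWalk_replicate_iff {G : GDB α} {x y : G.V} {a : α} {n : ℕ} :
    HasWalk G x (List.replicate n a) y ↔
      ∃ f : ℕ → G.V, f 0 = x ∧ f n = y ∧ ∀ j < n, (f j, a, f (j + 1)) ∈ G.edges := by
  simp [HasWalk, List.getElem_replicate]

lemma wpow_singleton (a : α) (n : ℕ) : wpow [a] n = List.replicate n a :=
  List.flatten_replicate_singleton

lemma node_zero (c : CRPQ α V) (w : Fin c.k → List α) (i : Fin c.k) :
    node c w i 0 = Sum.inl (c.src i) := if_pos rfl

lemma node_length {c : CRPQ α V} {w : Fin c.k → List α} {i : Fin c.k}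
    (h : (w i).length ≠ 0) : node c w i (w i).length = Sum.inl (c.tgt i) :=
  (if_neg h).trans (if_pos rfl)

lemma node_of_ne_zero_of_lt {c : CRPQ α V} {w : Fin c.k → List α} {i : Fin c.k} {j : ℕ}
    (h0 : j ≠ 0) (hj : j < (w i).length) :
    node c w i j = Sum.inr ⟨i, ⟨j - 1, by omega⟩⟩ :=
  (if_neg h0).trans ((if_neg hj.ne).trans (dif_pos _))

section Expansions

variable [Finite V]

lemma homToG_expansion_of_walks {c : CRPQ α V} {w : Fin c.k → List α} {G : GDB α}
    (v : V → G.V) (hwalk : ∀ i, HasWalk G (v (c.src i)) (w i) (v (c.tgt i))) :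
    (expansion c w).homToG G := by
  choose f h0 hn he using hwalk
  let F : RawVar c w → G.V := Sum.elim v fun z => f z.1 (z.2 + 1)
  have hF : ∀ x y, eqRel c w x y → F x = F y := by
    rintro x y ⟨i, hwi, rfl, rfl⟩
    have hn' := hn i
    simp only [hwi, List.length_nil] at hn'
    simp only [F, Sum.elim_inl, ← h0 i, hn']
  have hnode : ∀ i j, j ≤ (w i).length → F (node c w i j) = f i j := by
    intro i j hj
    rcases Nat.eq_zero_or_pos j with rfl | hpos
    · simp [F, node_zero, h0]
    rcases hj.eq_or_lt with rfl | hlt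
    · simp [F, node_length hpos.ne', hn]
    · simp only [F, node_of_ne_zero_of_lt hpos.ne' hlt, Sum.elim_inr]
      congr 1
      omega
  refine ⟨Quot.lift F hF, ?_⟩
  rintro x a y ⟨i, j, hj, hxy⟩
  cases hxy
  change (F (node c w i j), (w i)[j], F (node c w i (j + 1))) ∈ G.edges
  rw [hnode i j hj.le, hnode i (j + 1) hj]
  exact he i j hj

lemma walks_of_homToG_expansion {c : CRPQ α V} {w : Fin c.k → List α} {G : GDB α}
    (h : (expansion c w).homToG G) :
    ∃ v : V → G.V, ∀ i, HasWalk G (v (c.src i)) (w i) (v (c.tgt i)) := by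
  obtain ⟨h, hh⟩ := h
  refine ⟨fun x => h (Quot.mk _ (Sum.inl x)), fun i =>
    ⟨fun j => h (Quot.mk _ (node c w i j)), congrArg h (congrArg _ (node_zero c w i)), ?_,
      fun j hj => hh _ _ _ ⟨i, j, hj, rfl⟩⟩⟩
  by_cases hl : (w i).length = 0
  · have hnode : node c w i (w i).length = Sum.inl (c.src i) := by rw [hl, node_zero]
    have hquot : eqRel c w (Sum.inl (c.src i)) (Sum.inl (c.tgt i)) :=
      ⟨i, List.length_eq_zero_iff.mp hl, rfl, rfl⟩
    exact congrArg h ((congrArg _ hnode).trans (Quot.sound hquot))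
  · exact congrArg h (congrArg _ (node_length hl))

lemma satS_iff {Q : List (SCRPQ α V)} {G : GDB α} :
    SatS Q G ↔ ∃ d ∈ Q, ∃ w : Fin d.k → List α, (∀ i, w i ∈ (d.lang i).language) ∧
      (expansion d.toCRPQ w).homToG G := by
  constructor
  · rintro ⟨p, ⟨c, hc, w, hw, rfl⟩, hp⟩
    obtain ⟨d, hd, rfl⟩ := List.mem_map.mp hc
    exact ⟨d, hd, w, hw, hp⟩
  · rintro ⟨d, hd, w, hw, hp⟩
    exact ⟨_, ⟨d.toCRPQ, List.mem_map_of_mem hd, w, hw, rfl⟩, hp⟩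

lemma satS_canonicalDB {Q : List (SCRPQ α V)} {d : SCRPQ α V} (hd : d ∈ Q)
    {w : Fin d.k → List α} (hw : ∀ i, w i ∈ (d.lang i).language) :
    SatS Q (expansion d.toCRPQ w).canonicalDB :=
  satS_iff.2 ⟨d, hd, w, hw, id, fun _ _ _ h => h⟩

def SCRPQ.rename {W : Type} (g : V → W) (d : SCRPQ α V) : SCRPQ α W :=
  ⟨d.k, g ∘ d.src, d.lang, g ∘ d.tgt⟩

lemma satS_map_rename_iff {W : Type} [Finite W] (e : V ≃ W) {Q : List (SCRPQ α V)}
    {G : GDB α} : SatS (Q.map (SCRPQ.rename e)) G ↔ SatS Q G := by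
  rw [satS_iff, satS_iff]
  constructor
  · rintro ⟨_, hd', w, hw, hp⟩
    obtain ⟨d, hd, rfl⟩ := List.mem_map.mp hd'
    obtain ⟨v, hv⟩ := walks_of_homToG_expansion hp
    exact ⟨d, hd, w, hw, homToG_expansion_of_walks (v ∘ e) hv⟩
  · rintro ⟨d, hd, w, hw, hp⟩
    obtain ⟨v, hv⟩ := walks_of_homToG_expansion hp
    refine ⟨_, List.mem_map_of_mem hd, w, hw, homToG_expansion_of_walks (v ∘ e.symm) ?_⟩
    simpa [SCRPQ.rename, SCRPQ.toCRPQ] using hv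

end Expansions

lemma AtomLang.inSSFaStar_of_in_a_aStar {l : AtomLang α} (hl : l.in_a_aStar) : l.inSSFaStar := by
  cases l with
  | ssf => trivial
  | star => exact hl

lemma AtomLang.language_restrict_subset (S : Set α) (m : ℕ) (l : AtomLang α) :
    (l.restrict S m).language ⊆ l.language := by
  cases l with
  | ssf => exact subset_rfl
  | star w =>
    simp only [AtomLang.restrict]
    split_ifs
    · rintro _ ⟨n, -, rfl⟩
      exact ⟨n, rfl⟩
    · exact subset_rfl

lemma AtomLang.okOutside_restrict {l : AtomLang α} (hl : l.inSSFaStar) (S : Set α) (m : ℕ) :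
    (l.restrict S m).okOutside S := by
  cases l with
  | ssf => trivial
  | star w =>
    obtain ⟨a, rfl⟩ := hl
    simp only [AtomLang.restrict]
    split_ifs with h
    · trivial
    · exact ⟨a, fun ha => h ⟨a, ha, rfl⟩, rfl⟩

lemma AtomLang.replicate_mem_restrict_star_iff {S : Set α} {K : ℕ} {b : α} {n : ℕ} :
    List.replicate n b ∈ ((AtomLang.star [b]).restrict S K).language ↔ (b ∈ S → n ≤ K) := by
  by_cases hb : b ∈ S
  · simp only [AtomLang.restrict, if_pos (⟨b, hb, rfl⟩ : ∃ a ∈ S, [b] = [a]),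
      AtomLang.language, Set.mem_image, Set.mem_Iic, wpow_singleton, List.replicate_inj]
    simp [hb]
  · have hb' : ¬∃ a ∈ S, [b] = [a] := by simpa using hb
    simp only [AtomLang.restrict, if_neg hb', AtomLang.language, Set.mem_ofPred_eq,
      wpow_singleton, hb, false_imp_iff, iff_true]
    exact ⟨n, rfl⟩

def Shallow {ι : Type} (T : Set α) (N : ℕ) (w : ι → List α) : Prop :=
  ∀ i (j : ℕ) (hj : j < (w i).length), (w i)[j] ∈ T → j ≤ N

lemma shallow_empty {ι : Type} (N : ℕ) (w : ι → List α) : Shallow ∅ N w :=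
  fun _ _ _ h => h.elim

lemma shallow_of_mem_restrict {d : SCRPQ α V} (hd : ∀ i, (d.lang i).in_a_aStar)
    {T : Set α} {K : ℕ} {u : Fin d.k → List α}
    (hu : ∀ i, u i ∈ ((d.lang i).restrict T K).language) : Shallow T K u := by
  intro i j hj hT
  have hui := hu i
  cases hl : d.lang i with
  | ssf L =>
    obtain ⟨a, rfl⟩ : ∃ a, L = {[a]} := by simpa [hl, AtomLang.in_a_aStar] using hd i
    rw [hl] at hui
    simp only [AtomLang.restrict, AtomLang.language, Set.mem_singleton_iff] at hui
    simp only [hui, List.length_singleton] at hj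
    omega
  | star w =>
    obtain ⟨b, rfl⟩ : ∃ b, w = [b] := by simpa [hl, AtomLang.in_a_aStar] using hd i
    rw [hl] at hui
    obtain ⟨n, hn⟩ := AtomLang.language_restrict_subset T K _ hui
    rw [wpow_singleton] at hn
    rw [hn] at hui
    simp only [hn, List.getElem_replicate] at hT
    simp only [hn, List.length_replicate] at hj
    exact hj.le.trans (AtomLang.replicate_mem_restrict_star_iff.1 hui hT)

lemma k_le_natoms {Q : List (SCRPQ α V)} {d : SCRPQ α V} (hd : d ∈ Q) : d.k ≤ natoms Q :=
  List.single_le_sum (fun _ _ => Nat.zero_le _) _ (List.mem_map_of_mem hd)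

lemma length_le_nrBound {Q : List (SCRPQ α V)} {d : SCRPQ α V} (hd : d ∈ Q) {i : Fin d.k}
    {L : Set (List α)} {hL : L.Finite} (hi : d.lang i = .ssf L hL) {u : List α} (hu : u ∈ L) :
    u.length ≤ nrBound Q := by
  have hfin : ∀ l : AtomLang α,
      {n | ∃ (L : Set (List α)) (h : L.Finite), l = .ssf L h ∧ ∃ u ∈ L, u.length = n}.Finite := by
    rintro (⟨L, h⟩ | w)
    · refine (h.image List.length).subset ?_
      rintro n ⟨L', h', heq, u, hu, rfl⟩
      cases heq
      exact ⟨u, hu, rfl⟩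
    · refine Set.finite_empty.subset ?_
      rintro n ⟨L', h', heq, -⟩
      cases heq
  refine le_csSup (Set.Finite.bddAbove ?_) ⟨d, hd, i, L, hL, hi, u, hu, rfl⟩
  refine (Q.finite_toSet.biUnion fun d _ => Set.finite_iUnion fun i => hfin (d.lang i)).subset ?_
  rintro n ⟨d, hd, i, L, h, hi, u, hu, rfl⟩
  simp only [Set.mem_iUnion]
  exact ⟨d, hd, i, L, h, hi, u, hu, rfl⟩

lemma shallow_of_okOutside {Q : List (SCRPQ α V)} {e : SCRPQ α V} (he : e ∈ Q) {S : Set α}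
    (hok : ∀ i, (e.lang i).okOutside S) {s : Fin e.k → List α}
    (hs : ∀ i, s i ∈ (e.lang i).language) : Shallow S (nrBound Q) s := by
  intro i j hj hS
  have hsi := hs i
  have hoki := hok i
  cases hl : e.lang i with
  | ssf L h =>
    rw [hl] at hsi
    exact hj.le.trans (length_le_nrBound he hl hsi)
  | star w =>
    rw [hl] at hsi hoki
    obtain ⟨b, hb, rfl⟩ := hoki
    obtain ⟨n, hn⟩ := hsi
    simp only [hn, wpow_singleton, List.getElem_replicate] at hS
    exact absurd hS hb

lemma exists_shorter_chain_of_loop {X : Type} {R : X → X → Prop} {f : ℕ → X} {n i j : ℕ}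
    (hf : ∀ k < n, R (f k) (f (k + 1))) (hij : i < j) (hjn : j ≤ n) (hloop : f i = f j) :
    ∃ g : ℕ → X, g 0 = f 0 ∧ g (n - (j - i)) = f n ∧
      ∀ k < n - (j - i), R (g k) (g (k + 1)) := by
  refine ⟨fun k => if k ≤ i then f k else f (k + (j - i)), by simp, ?_, fun k hk => ?_⟩
  · dsimp only
    split_ifs with h
    · rw [show n - (j - i) = i by omega, hloop, show j = n by omega]
    · rw [show n - (j - i) + (j - i) = n by omega]
  · rcases lt_trichotomy k i with hki | rfl | hki
    · simpa [hki.le, Nat.succ_le_of_lt hki] using hf k (by omega)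
    · simpa [hloop, show k + 1 + (j - k) = j + 1 by omega] using hf j (by omega)
    · simpa [hki.not_ge, show ¬k + 1 ≤ i by omega,
        show k + 1 + (j - i) = k + (j - i) + 1 by omega] using hf (k + (j - i)) (by omega)

def ShortWalks (G : GDB α) (S : Set α) (M : ℕ) : Prop :=
  ∀ a ∈ S, ∀ (x y : G.V) (n : ℕ), HasWalk G x (List.replicate n a) y →
    ∃ n' ≤ M, HasWalk G x (List.replicate n' a) y

lemma ShortWalks.mono {G : GDB α} {S : Set α} {M M' : ℕ} (h : ShortWalks G S M)
    (hM : M ≤ M') : ShortWalks G S M' := fun a ha x y n hw =>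
  let ⟨n', hn', hw'⟩ := h a ha x y n hw
  ⟨n', hn'.trans hM, hw'⟩

lemma shortWalks_of_sources {G : GDB α} {S : Set α} (src : Finset G.V)
    (hsrc : ∀ x a y, (x, a, y) ∈ G.edges → a ∈ S → x ∈ src) : ShortWalks G S src.card := by
  intro a ha x y n
  induction n using Nat.strong_induction_on with
  | _ n ih =>
    intro hw
    by_cases hn : n ≤ src.card
    · exact ⟨n, hn, hw⟩
    obtain ⟨f, hf0, hfn, hf⟩ := hasWalk_replicate_iff.1 hw
    obtain ⟨i, hi, j, hj, hne, hfij⟩ := Finset.exists_ne_map_eq_of_card_lt_of_maps_to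
      (s := Finset.range n) (f := f) (by simpa using hn)
      (fun k hk => hsrc _ _ _ (hf k (Finset.mem_range.1 hk)) ha)
    simp only [Finset.mem_range] at hi hj
    wlog hij : i < j generalizing i j
    · exact this j i hne.symm hfij.symm hj hi (by omega)
    obtain ⟨g, hg0, hgn, hg⟩ := exists_shorter_chain_of_loop
      (R := fun u v => (u, a, v) ∈ G.edges) hf hij hj.le hfij
    exact ih (n - (j - i)) (by omega)
      (hasWalk_replicate_iff.2 ⟨g, hg0.trans hf0, hgn.trans hfn, hg⟩)

lemma shortWalks_expansion [Finite V] (c : CRPQ α V) {s : Fin c.k → List α} {T : Set α}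
    {N : ℕ} (hs : Shallow T N s) :
    ShortWalks (expansion c s).canonicalDB T (c.k * (N + 1)) := by
  classical
  let src : Finset (expansion c s).V := Finset.univ.image
    fun p : Fin c.k × Fin (N + 1) => Quot.mk _ (node c s p.1 p.2)
  refine (shortWalks_of_sources src ?_).mono ?_
  · rintro x a y ⟨i, j, hj, hxy⟩ ha
    cases hxy
    exact Finset.mem_image.2
      ⟨(i, ⟨j, Nat.lt_succ_of_le (hs i j hj ha)⟩), Finset.mem_univ _, rfl⟩
  · exact Finset.card_image_le.trans (by simp)

lemma exists_short_replicate_walk {G H : GDB α} {S T : Set α} {M₁ M₂ : ℕ}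
    (hG : ShortWalks G S M₁) (hH : ShortWalks H T M₂) {F : G.V → H.V}
    (hF : ∀ x a y, (x, a, y) ∈ G.edges → (F x, a, F y) ∈ H.edges)
    {x y : G.V} {b : α} {n : ℕ} (h : HasWalk G x (List.replicate n b) y) :
    ∃ n', (b ∈ T ∪ S → n' ≤ max M₂ M₁) ∧ HasWalk H (F x) (List.replicate n' b) (F y) := by
  by_cases hS : b ∈ S
  · obtain ⟨n', hn', h'⟩ := hG b hS x y n h
    exact ⟨n', fun _ => hn'.trans (le_max_right _ _), h'.map hF⟩
  by_cases hT : b ∈ T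
  · obtain ⟨n', hn', h'⟩ := hH b hT _ _ n (h.map hF)
    exact ⟨n', fun _ => hn'.trans (le_max_left _ _), h'⟩
  · exact ⟨n, fun hb => absurd hb (by simp [hS, hT]), h.map hF⟩

lemma AtomLang.exists_mem_restrict_walk {l : AtomLang α} (hl : l.in_a_aStar) {u : List α}
    (hu : u ∈ l.language) {G H : GDB α} {S T : Set α} {M₁ M₂ : ℕ}
    (hG : ShortWalks G S M₁) (hH : ShortWalks H T M₂) {F : G.V → H.V}
    (hF : ∀ x a y, (x, a, y) ∈ G.edges → (F x, a, F y) ∈ H.edges)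
    {x y : G.V} (h : HasWalk G x u y) :
    ∃ u' ∈ (l.restrict (T ∪ S) (max M₂ M₁)).language, HasWalk H (F x) u' (F y) := by
  cases l with
  | ssf => exact ⟨u, hu, h.map hF⟩
  | star w =>
    obtain ⟨b, rfl⟩ := hl
    obtain ⟨n, rfl⟩ := hu
    rw [wpow_singleton] at h
    obtain ⟨n', hn', h'⟩ := exists_short_replicate_walk hG hH hF h
    exact ⟨_, AtomLang.replicate_mem_restrict_star_iff.2 hn', h'⟩

section Boundedness

variable [Finite V] {W : Type} [Finite W]

lemma exists_restrict_expansion_homToG {q : List (SCRPQ α V)}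
    (hq : ∀ d ∈ q, ∀ i : Fin d.k, (d.lang i).in_a_aStar) {S : Set α} {Q' : List (SCRPQ α W)}
    (hok : ∀ e ∈ Q', ∀ i : Fin e.k, (e.lang i).okOutside S) (hequiv : QEquiv (SatS q) (SatS Q'))
    {T : Set α} {N : ℕ} {d : SCRPQ α V} (hd : d ∈ q) {w : Fin d.k → List α}
    (hw : ∀ i, w i ∈ (d.lang i).language) (hshallow : Shallow T N w) :
    ∃ d' ∈ q, ∃ u : Fin d'.k → List α,
      (∀ i, u i ∈ ((d'.lang i).restrict (T ∪ S)
        (max (natoms q * (N + 1)) (natoms Q' * (nrBound Q' + 1)))).language) ∧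
      (expansion d'.toCRPQ u).homToG (expansion d.toCRPQ w).canonicalDB := by
  obtain ⟨e, he, s, hs, F, hF⟩ := satS_iff.1 ((hequiv _).1 (satS_canonicalDB hd hw))
  obtain ⟨d', hd', t, ht, hr⟩ := satS_iff.1 ((hequiv _).2 (satS_canonicalDB he hs))
  obtain ⟨v, hv⟩ := walks_of_homToG_expansion hr
  have hr_short := (shortWalks_expansion e.toCRPQ (shallow_of_okOutside he (hok e he) hs)).mono
    (Nat.mul_le_mul_right _ (k_le_natoms he))
  have hp_short := (shortWalks_expansion d.toCRPQ hshallow).mono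
    (Nat.mul_le_mul_right _ (k_le_natoms hd))
  choose u hu hwalk using fun i =>
    AtomLang.exists_mem_restrict_walk (hq d' hd' i) (ht i) hr_short hp_short hF (hv i)
  exact ⟨d', hd', u, hu, homToG_expansion_of_walks (F ∘ v) hwalk⟩

lemma exists_contained_qrestrict_union {q : List (SCRPQ α V)}
    (hq : ∀ d ∈ q, ∀ i : Fin d.k, (d.lang i).in_a_aStar) {A B : Set α}
    {W' : Type} [Finite W'] {Q₁ : List (SCRPQ α W)} {Q₂ : List (SCRPQ α W')}
    (hok₁ : ∀ e ∈ Q₁, ∀ i : Fin e.k, (e.lang i).okOutside A)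
    (hequiv₁ : QEquiv (SatS q) (SatS Q₁))
    (hok₂ : ∀ e ∈ Q₂, ∀ i : Fin e.k, (e.lang i).okOutside B)
    (hequiv₂ : QEquiv (SatS q) (SatS Q₂)) :
    ∃ m, Contained (SatS q) (SatS (qrestrict q (A ∪ B) m)) := by
  let K := max (natoms q * (0 + 1)) (natoms Q₁ * (nrBound Q₁ + 1))
  refine ⟨max (natoms q * (K + 1)) (natoms Q₂ * (nrBound Q₂ + 1)), fun G hG => ?_⟩
  obtain ⟨d, hd, w, hw, hp⟩ := satS_iff.1 hG
  obtain ⟨d₁, hd₁, u₁, hu₁, hp₁⟩ :=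
    exists_restrict_expansion_homToG hq hok₁ hequiv₁ hd hw (shallow_empty 0 w)
  rw [Set.empty_union] at hu₁
  obtain ⟨d₂, hd₂, u₂, hu₂, hp₂⟩ := exists_restrict_expansion_homToG hq hok₂ hequiv₂ hd₁
    (fun i => AtomLang.language_restrict_subset _ _ _ (hu₁ i))
    (shallow_of_mem_restrict (hq d₁ hd₁) hu₁)
  exact satS_iff.2 ⟨_, List.mem_map_of_mem hd₂, u₂, hu₂, hp₂.trans (hp₁.trans hp)⟩

lemma satS_of_satS_qrestrict {q : List (SCRPQ α V)} {S : Set α} {m : ℕ} {G : GDB α}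
    (h : SatS (qrestrict q S m) G) : SatS q G := by
  obtain ⟨_, hd', w, hw, hp⟩ := satS_iff.1 h
  obtain ⟨d, hd, rfl⟩ := List.mem_map.mp hd'
  exact satS_iff.2 ⟨d, hd, w, fun i => AtomLang.language_restrict_subset _ _ _ (hw i), hp⟩

end Boundedness

lemma bddIn_of_contained_qrestrict [Fintype V] {q : List (SCRPQ α V)}
    (hq : ∀ d ∈ q, ∀ i : Fin d.k, (d.lang i).inSSFaStar) {S : Set α} {m : ℕ}
    (h : Contained (SatS q) (SatS (qrestrict q S m))) : BddIn q S := by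
  refine ⟨Fintype.card V, (qrestrict q S m).map (SCRPQ.rename (Fintype.equivFin V)), ?_,
    fun G => ?_⟩
  · intro d' hd' i
    obtain ⟨_, hd'', rfl⟩ := List.mem_map.mp hd'
    obtain ⟨d, hd, rfl⟩ := List.mem_map.mp hd''
    exact AtomLang.okOutside_restrict (hq d hd i) S m
  · rw [satS_map_rename_iff]
    exact ⟨h G, satS_of_satS_qrestrict⟩

theorem statement13_general {α V : Type} [Fintype V] (q : List (SCRPQ α V))
    (hclass : ∀ d ∈ q, ∀ i : Fin d.k, (d.lang i).in_a_aStar) (A B : Set α)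
    (hA : BddIn q A) (hB : BddIn q B) : BddIn q (A ∪ B) := by
  obtain ⟨_, Q₁, hok₁, hequiv₁⟩ := hA
  obtain ⟨_, Q₂, hok₂, hequiv₂⟩ := hB
  obtain ⟨m, hm⟩ := exists_contained_qrestrict_union hclass hok₁ hequiv₁ hok₂ hequiv₂
  exact bddIn_of_contained_qrestrict
    (fun d hd i => AtomLang.inSSFaStar_of_in_a_aStar (hclass d hd i)) hm

/-- if `q ∈ UCRPQ(a, a*)` is `A`-bounded and `B`-bounded then it is
`(A ∪ B)`-bounded. -/
theorem statement13 {α V : Type} [Fintype α] [Fintype V] (q : List (SCRPQ α V))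
    (hclass : ∀ d ∈ q, ∀ i : Fin d.k, (d.lang i).in_a_aStar) (A B : Set α)
    (hA : BddIn q A) (hB : BddIn q B) : BddIn q (A ∪ B) :=
  statement13_general q hclass A B hA hB

end Paper
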